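/- arXiv:1907.10388 — 2 statements merged into one kernel-verified Lean document; each statement's English description precedes it below -/
import Mathlib

section
/- Let 𝕀 and Z be nonempty finite types with Fintype.card Z < Fintype.card 𝕀, and let e : 𝕀 → ℝ be injective. Define L = { F : 𝕀 → (ℝ → ℝ) | ∃ a : ℝ, ∃ g : Z → ℝ, ∃ c : 𝕀 → Z, ∀ I, F I = fun x => a * x + g (c I) } and H = { F : 𝕀 → (ℝ → ℝ) | ∃ w β : 𝕀 → ℝ, ∀ I, F I = fun x => w I * x + β I }. Then L is a strict subset of H: L ⊆ H, and the family F₀ defined by F₀ I = (fun x => e I * x) lies in H but not in L. -/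
/-- Scalar instance of Theorem 1: the set `L` of function families computable
by an LVC architecture is a strict subset of the set `H` of families
computable by a HOF architecture, witnessed by `F₀ I = fun x => e I * x`. -/
theorem lvc_ssubset_hof_scalar (𝕀 Z : Type*) [Fintype 𝕀] [Fintype Z]
    [Nonempty 𝕀] [Nonempty Z]
    (hcard : Fintype.card Z < Fintype.card 𝕀)
    (e : 𝕀 → ℝ) (he : Function.Injective e) :
    let L : Set (𝕀 → (ℝ → ℝ)) :=
      { F | ∃ a : ℝ, ∃ g : Z → ℝ, ∃ c : 𝕀 → Z,
          ∀ I, F I = fun x => a * x + g (c I) }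
    let H : Set (𝕀 → (ℝ → ℝ)) :=
      { F | ∃ w β : 𝕀 → ℝ, ∀ I, F I = fun x => w I * x + β I }
    let F₀ : 𝕀 → (ℝ → ℝ) := fun I => fun x => e I * x
    L ⊆ H ∧ F₀ ∈ H ∧ F₀ ∉ L := by
  intro L H F₀
  refine ⟨?_, ?_, ?_⟩
  · rintro F ⟨a, g, c, hF⟩
    exact ⟨fun _ => a, fun I => g (c I), hF⟩
  · exact ⟨e, fun _ => 0, fun I => by funext x; simp [F₀]⟩
  · rintro ⟨a, g, c, hF⟩
    -- evaluate at each I : for all x, e I * x = a * x + g (c I)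
    have key : ∀ I : 𝕀, e I = a := by
      intro I
      have h0 := congrFun (hF I) 0
      have h1 := congrFun (hF I) 1
      simp [F₀] at h0 h1
      linarith
    have h2 : 1 < Fintype.card 𝕀 := lt_of_le_of_lt Fintype.card_pos hcard
    obtain ⟨I₁, I₂, hne⟩ := Fintype.exists_pair_of_one_lt_card h2
    exact hne (he ((key I₁).trans (key I₂).symm))
end

section
/- Let 𝕀 be a nonempty finite type, Z a nonempty finite type with Fintype.card Z < Fintype.card 𝕀, n, m ≥ 1, σ : ℝᵐ → ℝᵐ an injective activation, and e : 𝕀 → ℝ injective. Define L = { F : 𝕀 → (ℝⁿ → ℝᵐ) | ∃ A : ℝⁿ →ₗ[ℝ] ℝᵐ, ∃ b' : Z → ℝᵐ, ∃ c : 𝕀 → Z, ∀ I, F I = fun x => σ (A x + b' (c I)) } and H = { F : 𝕀 → (ℝⁿ → ℝᵐ) | ∃ W : 𝕀 → (ℝⁿ →ₗ[ℝ] ℝᵐ), ∃ β : 𝕀 → ℝᵐ, ∀ I, F I = fun x => σ ((W I) x + β I) }. Then L ⊂ H: every family in L is in H, and the family F₀ I = (fun x => σ ((e I) • (P x))) —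 where P : ℝⁿ →ₗ[ℝ] ℝᵐ sends x to the vector whose 0-th coordinate is x 0 and whose other coordinates are 0 — lies in H but not in L. -/
/-- The linear map `P : ℝⁿ →ₗ[ℝ] ℝᵐ` sending `x` to the vector whose 0-th
coordinate is `x 0` and whose other coordinates are `0`. -/
def firstCoordMap (n m : ℕ) (hn : 1 ≤ n) (hm : 1 ≤ m) :
    (Fin n → ℝ) →ₗ[ℝ] (Fin m → ℝ) where
  toFun x := fun j => if j = (⟨0, hm⟩ : Fin m) then x ⟨0, hn⟩ else 0
  map_add' x y := by
    funext j
    by_cases h : j = (⟨0, hm⟩ : Fin m) <;> simp [h]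
  map_smul' r x := by
    funext j
    by_cases h : j = (⟨0, hm⟩ : Fin m) <;> simp [h]

/-- Theorem 1 for a single decoder layer: LVC architectures represent a
strictly smaller set of function families than HOF architectures; the family
`F₀ I = fun x => σ (e I • P x)` lies in `H` but not in `L`. -/
theorem lvc_ssubset_hof (𝕀 Z : Type*) [Fintype 𝕀] [Fintype Z]
    [Nonempty 𝕀] [Nonempty Z]
    (hcard : Fintype.card Z < Fintype.card 𝕀)
    (n m : ℕ) (hn : 1 ≤ n) (hm : 1 ≤ m)
    (σ : (Fin m → ℝ) → (Fin m → ℝ)) (hσ : Function.Injective σ)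
    (e : 𝕀 → ℝ) (he : Function.Injective e) :
    let L : Set (𝕀 → ((Fin n → ℝ) → (Fin m → ℝ))) :=
      { F | ∃ A : (Fin n → ℝ) →ₗ[ℝ] (Fin m → ℝ), ∃ b' : Z → (Fin m → ℝ),
          ∃ c : 𝕀 → Z, ∀ I, F I = fun x => σ (A x + b' (c I)) }
    let H : Set (𝕀 → ((Fin n → ℝ) → (Fin m → ℝ))) :=
      { F | ∃ W : 𝕀 → ((Fin n → ℝ) →ₗ[ℝ] (Fin m → ℝ)), ∃ β : 𝕀 → (Fin m → ℝ),
          ∀ I, F I = fun x => σ ((W I) x + β I) }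
    let F₀ : 𝕀 → ((Fin n → ℝ) → (Fin m → ℝ)) :=
      fun I => fun x => σ (e I • firstCoordMap n m hn hm x)
    L ⊆ H ∧ F₀ ∈ H ∧ F₀ ∉ L := by
  intro L H F₀
  refine ⟨?_, ?_, ?_⟩
  · rintro F ⟨A, b', c, hF⟩
    exact ⟨fun _ => A, fun I => b' (c I), hF⟩
  · refine ⟨fun I => e I • firstCoordMap n m hn hm, fun _ => 0, fun I => ?_⟩
    funext x
    simp [F₀]
  · rintro ⟨A, b', c, hF⟩
    obtain ⟨I, J, hIJ, hc⟩ := Fintype.exists_ne_map_eq_of_card_lt c hcard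
    have key : ∀ (K : 𝕀) (x : Fin n → ℝ),
        e K • firstCoordMap n m hn hm x = A x + b' (c K) := by
      intro K x
      exact hσ (congrFun (hF K) x)
    set x0 : Fin n → ℝ := Pi.single (⟨0, hn⟩ : Fin n) 1 with hx0
    have h1 := key I x0
    have h2 := key J x0
    rw [hc] at h1
    have hdiff : e I • firstCoordMap n m hn hm x0 = e J • firstCoordMap n m hn hm x0 := by
      rw [h1, h2]
    have hcoord := congrFun hdiff (⟨0, hm⟩ : Fin m)
    have hval : firstCoordMap n m hn hm x0 (⟨0, hm⟩ : Fin m) = 1 := by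
      simp [firstCoordMap, hx0]
    simp only [Pi.smul_apply, hval, smul_eq_mul, mul_one] at hcoord
    exact hIJ (he hcoord)
end
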